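/- Let X be a Banach lattice and let (x_n)_{n∈ℕ} be a sequence in X that is equivalent to the canonical basis of c_0, i.e., there are constants c, C > 0 such that c · max_{1≤i≤m} |λ_i| ≤ ‖∑_{i=1}^m λ_i x_i‖ ≤ C · max_{1≤i≤m} |λ_i| for all m and all real scalars λ_1, …, λ_m. Then the sequence (|x_n|) satisfies an upper ℓ_2-estimate: there is a constant K > 0 such that ‖∑_{i=1}^m λ_i |x_i|‖ ≤ K (∑_{i=1}^m λ_i^2)^{1/2} for all m and all real scalars λ_1, …, λ_m. -/

import Mathlib

/-!
Testing the upper `c₀`-estimate on signs gives `‖∑ σ_i x_i‖ ≤ C` for every sign vector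
`σ ∈ {±1}ⁿ`. By Khintchine's inequality in `L¹` and Hahn–Banach duality in `ℝⁿ`, every `a ∈ ℝⁿ`
is a combination `a = ∑_σ θ_σ σ` with `2ⁿ |θ_σ| ≤ 5 ‖a‖₂`. Hence every `∑ a_i x_i` lies below
`5 ‖a‖₂ 2⁻ⁿ ∑_σ |∑_i σ_i x_i|`, a positive element of norm at most `5 C ‖a‖₂`. Taking
`a = (±λ_i)` over all signs bounds `∑ |λ_i x_i|`, which dominates `|∑ λ_i |x_i||`.
-/

open Finset Filter Topology

lemma inv_two_pow_smul_nonneg {X : Type*} [AddCommGroup X] [Lattice X] [IsOrderedAddMonoid X]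
    [Module ℝ X] (k : ℕ) {z : X} (hz : 0 ≤ z) : 0 ≤ ((2 : ℝ) ^ k)⁻¹ • z := by
  induction k with
  | zero => simpa using hz
  | succ k ih =>
    refine nsmul_two_semiclosed ?_
    rwa [← Nat.cast_smul_eq_nsmul ℝ, smul_smul, pow_succ, mul_inv, Nat.cast_ofNat,
      mul_left_comm, mul_inv_cancel₀ two_ne_zero, mul_one]

section LatticeAbs
variable {𝕜 M : Type*} [Field 𝕜] [LinearOrder 𝕜] [IsStrictOrderedRing 𝕜] [AddCommGroup M]
  [Lattice M] [IsOrderedAddMonoid M] [Module 𝕜 M] [PosSMulMono 𝕜 M]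

lemma abs_smul_eq_smul_abs_of_nonneg {a : 𝕜} (ha : 0 ≤ a) (b : M) : |a • b| = a • |b| := by
  rcases ha.eq_or_lt with rfl | ha
  · simp
  · simp only [abs, ← smul_neg]
    exact ((OrderIso.smulRight ha).map_sup b (-b)).symm

lemma abs_smul_eq_abs_smul_abs (a : 𝕜) (b : M) : |a • b| = |a| • |b| := by
  rcases le_total 0 a with ha | ha
  · rw [abs_smul_eq_smul_abs_of_nonneg ha, abs_of_nonneg ha]
  · rw [← abs_neg, ← neg_smul, abs_smul_eq_smul_abs_of_nonneg (neg_nonneg.2 ha), abs_of_nonpos ha]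

end LatticeAbs

section Solid
variable {X : Type*} [NormedAddCommGroup X] [Lattice X] [IsOrderedAddMonoid X] [HasSolidNorm X]
  [NormedSpace ℝ X]

lemma HasSolidNorm.smul_nonneg {r : ℝ} (hr : 0 ≤ r) {z : X} (hz : 0 ≤ z) : 0 ≤ r • z := by
  have hdyadic : ∀ k : ℕ, 0 ≤ ((⌊r * 2 ^ k⌋₊ : ℝ) / 2 ^ k) • z := fun k => by
    rw [div_eq_mul_inv, mul_smul, Nat.cast_smul_eq_nsmul]
    exact nsmul_nonneg (inv_two_pow_smul_nonneg k hz) _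
  have hlim : Tendsto (fun k : ℕ => (⌊r * 2 ^ k⌋₊ : ℝ) / 2 ^ k) atTop (𝓝 r) :=
    (tendsto_nat_floor_mul_div_atTop hr).comp (tendsto_pow_atTop_atTop_of_one_lt one_lt_two)
  exact isClosed_nonneg.mem_of_tendsto (hlim.smul_const z) (.of_forall hdyadic)

instance HasSolidNorm.posSMulMono : PosSMulMono ℝ X :=
  .of_smul_nonneg fun _ hr _ hz => HasSolidNorm.smul_nonneg hr hz

end Solid

section LatticeOrderedGroup
variable {α ι : Type*} [AddCommGroup α] [Lattice α] [IsOrderedAddMonoid α]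

lemma Finset.abs_sum_le_sum_abs_of_lattice (s : Finset ι) (f : ι → α) :
    |∑ i ∈ s, f i| ≤ ∑ i ∈ s, |f i| :=
  Finset.le_sum_of_subadditive _ abs_zero.le abs_add_le s f

lemma Finset.sum_abs_le_of_forall_signed_sum_le [DecidableEq ι] (s : Finset ι) (y : ι → α) (v : α)
    (h : ∀ ε : ι → Bool, ∑ i ∈ s, (if ε i then y i else -y i) ≤ v) :
    ∑ i ∈ s, |y i| ≤ v := by
  induction s using Finset.induction_on generalizing v with
  | empty => simpa using h fun _ => true
  | @insert j s hj ih =>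
    have hsign : ∀ e : Bool, ∑ i ∈ s, |y i| ≤ v - (if e then y j else -y j) := fun e =>
      ih _ fun ε => by
        have hupd := h (Function.update ε j e)
        rw [sum_insert hj, Function.update_self] at hupd
        rw [le_sub_iff_add_le, add_comm]
        convert hupd using 2
        refine sum_congr rfl fun i hi => ?_
        rw [Function.update_of_ne (ne_of_mem_of_not_mem hi hj)]
    rw [sum_insert hj, add_comm, ← le_sub_iff_add_le, abs, sub_sup]
    exact le_inf (by simpa using hsign true) (by simpa using hsign false)

end LatticeOrderedGroup

def boolSign (b : Bool) : ℝ := if b then 1 else -1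

@[simp] lemma boolSign_true : boolSign true = 1 := rfl
@[simp] lemma boolSign_false : boolSign false = -1 := rfl

@[simp] lemma abs_boolSign (b : Bool) : |boolSign b| = 1 := by cases b <;> simp

def rademacher {n : ℕ} (σ : Fin n → Bool) : Fin n → ℝ := fun i => boolSign (σ i)

lemma Fintype.sum_fin_succ_bool {M : Type*} [AddCommMonoid M] {n : ℕ}
    (F : (Fin (n + 1) → Bool) → M) :
    ∑ σ, F σ = ∑ τ : Fin n → Bool, (F (Fin.cons true τ) + F (Fin.cons false τ)) := by
  rw [← Fintype.sum_equiv (Fin.consEquiv fun _ => Bool) (fun p => F (Fin.cons p.1 p.2)) F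
    fun _ => rfl, Fintype.sum_prod_type, Fintype.sum_bool, sum_add_distrib]

lemma rademacher_cons_dotProduct {n : ℕ} (b : Bool) (τ : Fin n → Bool) (c : Fin (n + 1) → ℝ) :
    rademacher (Fin.cons b τ) ⬝ᵥ c = boolSign b * c 0 + rademacher τ ⬝ᵥ Fin.tail c := by
  simp [dotProduct, Fin.sum_univ_succ, rademacher, Fin.tail]

lemma card_fin_fun_bool (n : ℕ) : ((Finset.univ : Finset (Fin n → Bool)).card : ℝ) = 2 ^ n := by
  simp

lemma sum_rademacher_dotProduct_sq {n : ℕ} (c : Fin n → ℝ) :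
    ∑ σ, (rademacher σ ⬝ᵥ c) ^ 2 = 2 ^ n * ∑ i, c i ^ 2 := by
  induction n with
  | zero => simp
  | succ n ih =>
    have hpair : ∀ τ : Fin n → Bool, (rademacher (Fin.cons true τ) ⬝ᵥ c) ^ 2
        + (rademacher (Fin.cons false τ) ⬝ᵥ c) ^ 2
          = 2 * c 0 ^ 2 + 2 * (rademacher τ ⬝ᵥ Fin.tail c) ^ 2 := fun τ => by
      simp only [rademacher_cons_dotProduct, boolSign_true, boolSign_false]; ring
    rw [Fintype.sum_fin_succ_bool, sum_congr rfl fun τ _ => hpair τ, sum_add_distrib, sum_const,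
      ← mul_sum, ih, nsmul_eq_mul, card_fin_fun_bool, Fin.sum_univ_succ, pow_succ (2 : ℝ) n]
    simp only [Fin.tail]
    ring

lemma sum_rademacher_dotProduct_pow_four_le {n : ℕ} (c : Fin n → ℝ) :
    ∑ σ, (rademacher σ ⬝ᵥ c) ^ 4 ≤ 3 * 2 ^ n * (∑ i, c i ^ 2) ^ 2 := by
  induction n with
  | zero => simp
  | succ n ih =>
    have hpair : ∀ τ : Fin n → Bool, (rademacher (Fin.cons true τ) ⬝ᵥ c) ^ 4
        + (rademacher (Fin.cons false τ) ⬝ᵥ c) ^ 4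
          = 2 * (rademacher τ ⬝ᵥ Fin.tail c) ^ 4
            + 12 * c 0 ^ 2 * (rademacher τ ⬝ᵥ Fin.tail c) ^ 2 + 2 * c 0 ^ 4 := fun τ => by
      simp only [rademacher_cons_dotProduct, boolSign_true, boolSign_false]; ring
    rw [Fintype.sum_fin_succ_bool, sum_congr rfl fun τ _ => hpair τ, sum_add_distrib,
      sum_add_distrib, sum_const, ← mul_sum, ← mul_sum, sum_rademacher_dotProduct_sq,
      nsmul_eq_mul, card_fin_fun_bool, Fin.sum_univ_succ (fun i => c i ^ 2), pow_succ (2 : ℝ) n]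
    have ih' := ih (Fin.tail c)
    simp only [Fin.tail] at ih' ⊢
    have hB : 0 ≤ ∑ i : Fin n, c i.succ ^ 2 := by positivity
    nlinarith [(by positivity : (0 : ℝ) ≤ 2 ^ n * c 0 ^ 4),
      mul_nonneg (mul_nonneg (pow_nonneg zero_le_two n) (sq_nonneg (c 0))) hB]

lemma sq_le_mul_abs_add_pow_four_div {t : ℝ} (ht : 0 < t) (z : ℝ) :
    z ^ 2 ≤ t * |z| + z ^ 4 / t ^ 2 := by
  rcases le_or_gt |z| t with hz | hz
  · have : z ^ 2 ≤ t * |z| := by rw [← sq_abs, sq]; gcongr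
    linarith [(by positivity : 0 ≤ z ^ 4 / t ^ 2)]
  · have : z ^ 2 ≤ z ^ 4 / t ^ 2 := by
      rw [le_div_iff₀ (by positivity), (by ring : z ^ 4 = z ^ 2 * z ^ 2), ← sq_abs z]
      gcongr
    linarith [(by positivity : 0 ≤ t * |z|)]

/-- Khintchine's inequality in `L¹`, with a non-optimal constant. -/
theorem two_pow_mul_sqrt_sum_sq_le_sum_abs_rademacher_dotProduct {n : ℕ} (c : Fin n → ℝ) :
    2 ^ n * √(∑ i, c i ^ 2) ≤ 5 * ∑ σ, |rademacher σ ⬝ᵥ c| := by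
  set B := ∑ i, c i ^ 2
  set S := ∑ σ, |rademacher σ ⬝ᵥ c|
  have hS : 0 ≤ S := by positivity
  rcases (Real.sqrt_nonneg B).eq_or_lt with hs | hs
  · rw [← hs, mul_zero]; positivity
  set s := √B
  have hsB : s ^ 2 = B := Real.sq_sqrt (by positivity)
  -- `t = √6 s` makes the fourth-moment term `3 · 2ⁿ B² / t²` half the second moment `2ⁿ B`.
  have ht : 0 < √6 * s := by positivity
  have hmoments : 2 ^ n * B ≤ √6 * s * S + 2 ^ n * B / 2 := by
    calc 2 ^ n * B = ∑ σ, (rademacher σ ⬝ᵥ c) ^ 2 := (sum_rademacher_dotProduct_sq c).symm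
      _ ≤ ∑ σ, (√6 * s * |rademacher σ ⬝ᵥ c| + (rademacher σ ⬝ᵥ c) ^ 4 / (√6 * s) ^ 2) :=
          sum_le_sum fun σ _ => sq_le_mul_abs_add_pow_four_div ht _
      _ ≤ √6 * s * S + 3 * 2 ^ n * B ^ 2 / (6 * B) := by
          rw [sum_add_distrib, ← mul_sum, ← sum_div, mul_pow, Real.sq_sqrt (by norm_num), hsB]
          gcongr
          exact sum_rademacher_dotProduct_pow_four_le c
      _ = √6 * s * S + 2 ^ n * B / 2 := by
          field_simp
          ring
  have h6 : √6 ≤ 5 / 2 := Real.sqrt_le_iff.2 ⟨by norm_num, by norm_num⟩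
  rw [← hsB] at hmoments
  nlinarith [mul_le_mul_of_nonneg_right h6 (mul_nonneg hs.le hS)]

theorem exists_rademacher_combination_eq {n : ℕ} (b : Fin n → ℝ) :
    ∃ θ : (Fin n → Bool) → ℝ, 2 ^ n * ‖θ‖ ≤ 5 * √(∑ i, b i ^ 2) ∧
      ∑ σ, θ σ • rademacher σ = b := by
  set ρ := 5 * √(∑ i, b i ^ 2) / 2 ^ n
  set T := Fintype.linearCombination ℝ (rademacher (n := n))
  have hT : ∀ θ, T θ = ∑ σ, θ σ • rademacher σ := fun _ => rfl
  suffices b ∈ T '' Metric.closedBall 0 ρ by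
    obtain ⟨θ, hθ, rfl⟩ := this
    refine ⟨θ, ?_, rfl⟩
    rw [mem_closedBall_zero_iff] at hθ
    rw [← le_div_iff₀' (by positivity)]
    exact hθ
  by_contra hb
  obtain ⟨f, u, hf_lt, hu_lt⟩ := geometric_hahn_banach_closed_point
    ((convex_closedBall 0 ρ).linear_image T)
    ((isCompact_closedBall 0 ρ).image T.continuous_of_finiteDimensional).isClosed hb
  set c : Fin n → ℝ := fun i => f fun j => if i = j then 1 else 0
  have hf : ∀ y, f y = y ⬝ᵥ c := (f : (Fin n → ℝ) →ₗ[ℝ] ℝ).pi_apply_eq_sum_univ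
  set θ : (Fin n → Bool) → ℝ := fun σ => ρ * SignType.sign (rademacher σ ⬝ᵥ c)
  have hθ : θ ∈ Metric.closedBall 0 ρ := by
    rw [mem_closedBall_zero_iff]
    refine pi_norm_le_iff_of_nonneg (by positivity) |>.2 fun σ => ?_
    rw [Real.norm_eq_abs, abs_mul, abs_of_nonneg (by positivity)]
    refine mul_le_of_le_one_right (by positivity) ?_
    cases SignType.sign (rademacher σ ⬝ᵥ c) <;> simp
  have hfθ : f (T θ) = ρ * ∑ σ, |rademacher σ ⬝ᵥ c| := by
    simp only [hf, hT, sum_dotProduct, smul_dotProduct, smul_eq_mul, θ, mul_sum, mul_assoc,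
      sign_mul_self]
  have hfb : f b ≤ f (T θ) := by
    calc f b = b ⬝ᵥ c := hf b
      _ ≤ √(∑ i, b i ^ 2) * √(∑ i, c i ^ 2) := Real.sum_mul_le_sqrt_mul_sqrt _ _ _
      _ = ρ / 5 * (2 ^ n * √(∑ i, c i ^ 2)) := by simp only [ρ]; field_simp
      _ ≤ ρ / 5 * (5 * ∑ σ, |rademacher σ ⬝ᵥ c|) :=
          mul_le_mul_of_nonneg_left
            (two_pow_mul_sqrt_sum_sq_le_sum_abs_rademacher_dotProduct c) (by positivity)
      _ = f (T θ) := by rw [hfθ]; ring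
  exact (hfb.trans (hf_lt _ ⟨θ, hθ, rfl⟩).le).not_gt hu_lt

section RademacherSums
variable {X : Type*} [AddCommGroup X] [Lattice X] [IsOrderedAddMonoid X] [Module ℝ X]
  [PosSMulMono ℝ X] {n : ℕ}

lemma sum_smul_le_smul_sum_abs_rademacher (x : Fin n → X) (a : Fin n → ℝ) :
    ∑ i, a i • x i ≤ (5 * √(∑ i, a i ^ 2) / 2 ^ n) • ∑ σ, |∑ i, rademacher σ i • x i| := by
  obtain ⟨θ, hθ, rfl⟩ := exists_rademacher_combination_eq a
  have hcomb : ∑ i, (∑ σ, θ σ • rademacher σ) i • x i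
      = ∑ σ, θ σ • ∑ i, rademacher σ i • x i := by
    simp only [Finset.sum_apply, Pi.smul_apply, smul_eq_mul, sum_smul, smul_sum, mul_smul]
    exact sum_comm
  rw [hcomb, smul_sum]
  refine sum_le_sum fun σ _ => ?_
  calc θ σ • ∑ i, rademacher σ i • x i ≤ |θ σ| • |∑ i, rademacher σ i • x i| :=
        (le_abs_self _).trans_eq (abs_smul_eq_abs_smul_abs _ _)
    _ ≤ (5 * √(∑ i, (∑ σ, θ σ • rademacher σ) i ^ 2) / 2 ^ n)
          • |∑ i, rademacher σ i • x i| := by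
        refine smul_le_smul_of_nonneg_right ?_ (abs_nonneg _)
        rw [le_div_iff₀' (by positivity)]
        exact (mul_le_mul_of_nonneg_left (norm_le_pi_norm θ σ) (by positivity)).trans hθ

lemma sum_abs_smul_le_smul_sum_abs_rademacher (x : Fin n → X) (lam : Fin n → ℝ) :
    ∑ i, |lam i • x i| ≤ (5 * √(∑ i, lam i ^ 2) / 2 ^ n) • ∑ σ, |∑ i, rademacher σ i • x i| := by
  refine sum_abs_le_of_forall_signed_sum_le _ _ _ fun ε => ?_
  have hsigned : ∑ i, (if ε i then lam i • x i else -(lam i • x i))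
      = ∑ i, (rademacher ε i * lam i) • x i :=
    sum_congr rfl fun i _ => by simp only [rademacher]; cases ε i <;> simp
  have hsq : ∑ i, (rademacher ε i * lam i) ^ 2 = ∑ i, lam i ^ 2 :=
    sum_congr rfl fun i _ => by simp only [rademacher, mul_pow]; cases ε i <;> simp
  rw [hsigned, ← hsq]
  exact sum_smul_le_smul_sum_abs_rademacher x _

end RademacherSums

theorem norm_sum_smul_abs_le_of_forall_norm_sum_rademacher_le {X : Type*} [NormedAddCommGroup X]
    [Lattice X] [IsOrderedAddMonoid X] [HasSolidNorm X] [NormedSpace ℝ X] {n : ℕ} (x : Fin n → X)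
    {C : ℝ} (hC : ∀ σ, ‖∑ i, rademacher σ i • x i‖ ≤ C) (lam : Fin n → ℝ) :
    ‖∑ i, lam i • |x i|‖ ≤ 5 * C * √(∑ i, lam i ^ 2) := by
  set W := ∑ σ, |∑ i, rademacher σ i • x i|
  have habs : |(∑ i, lam i • |x i|)| ≤ |(5 * √(∑ i, lam i ^ 2) / 2 ^ n) • W| := by
    rw [abs_of_nonneg (smul_nonneg (by positivity) (sum_nonneg fun _ _ => abs_nonneg _))]
    refine (abs_sum_le_sum_abs_of_lattice _ _).trans (le_of_eq_of_le ?_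
      (sum_abs_smul_le_smul_sum_abs_rademacher x lam))
    refine sum_congr rfl fun i _ => ?_
    rw [abs_smul_eq_abs_smul_abs, abs_smul_eq_abs_smul_abs, abs_abs]
  have hW : ‖W‖ ≤ 2 ^ n * C := by
    refine (norm_sum_le _ _).trans ?_
    simpa [norm_abs_eq_norm] using sum_le_sum fun σ (_ : σ ∈ univ) => hC σ
  calc ‖∑ i, lam i • |x i|‖ ≤ ‖(5 * √(∑ i, lam i ^ 2) / 2 ^ n) • W‖ :=
        norm_le_norm_of_abs_le_abs habs
    _ = 5 * √(∑ i, lam i ^ 2) / 2 ^ n * ‖W‖ := by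
        rw [norm_smul, Real.norm_of_nonneg (by positivity)]
    _ ≤ 5 * √(∑ i, lam i ^ 2) / 2 ^ n * (2 ^ n * C) := by gcongr
    _ = 5 * C * √(∑ i, lam i ^ 2) := by field_simp

theorem abs_of_c0_sequence_upper_estimate_general
    (X : Type) [NormedAddCommGroup X] [Lattice X] [IsOrderedAddMonoid X] [HasSolidNorm X] [NormedSpace ℝ X]
    (x : ℕ → X) (C : ℝ) (hC : 0 < C)
    (hupp : ∀ (m : ℕ) (lam : Fin m → ℝ),
      ‖∑ i, lam i • x (i : ℕ)‖ ≤ C * (⨆ i : Fin m, |lam i|)) :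
    ∃ K : ℝ, 0 < K ∧ ∀ (m : ℕ) (lam : Fin m → ℝ),
      ‖∑ i, lam i • |x (i : ℕ)|‖ ≤ K * (∑ i, (lam i) ^ 2) ^ ((1 : ℝ) / 2) := by
  refine ⟨5 * C, by positivity, fun m lam => ?_⟩
  rw [← Real.sqrt_eq_rpow]
  refine norm_sum_smul_abs_le_of_forall_norm_sum_rademacher_le (fun i : Fin m => x i)
    (fun σ => ?_) lam
  calc ‖∑ i, rademacher σ i • x i‖ ≤ C * ⨆ i, |rademacher σ i| := hupp m (rademacher σ)
    _ ≤ C * 1 := by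
        gcongr
        exact Real.iSup_le (fun i => (abs_boolSign (σ i)).le) zero_le_one
    _ = C := mul_one C

/-- **Upper ℓ₂-estimate for moduli of c₀-sequences.** If `(x_n)` is a sequence in a Banach
lattice `X` equivalent to the canonical basis of `c₀`, then the sequence of absolute
values `(|x_n|)` satisfies an upper `ℓ₂`-estimate. -/
theorem abs_of_c0_sequence_upper_estimate
    (X : Type) [NormedAddCommGroup X] [Lattice X] [IsOrderedAddMonoid X] [HasSolidNorm X] [NormedSpace ℝ X] [CompleteSpace X]
    (x : ℕ → X) (c C : ℝ) (hc : 0 < c) (hC : 0 < C)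
    (hlow : ∀ (m : ℕ) (lam : Fin m → ℝ),
      c * (⨆ i : Fin m, |lam i|) ≤ ‖∑ i, lam i • x (i : ℕ)‖)
    (hupp : ∀ (m : ℕ) (lam : Fin m → ℝ),
      ‖∑ i, lam i • x (i : ℕ)‖ ≤ C * (⨆ i : Fin m, |lam i|)) :
    ∃ K : ℝ, 0 < K ∧ ∀ (m : ℕ) (lam : Fin m → ℝ),
      ‖∑ i, lam i • |x (i : ℕ)|‖ ≤ K * (∑ i, (lam i) ^ 2) ^ ((1 : ℝ) / 2) :=
  abs_of_c0_sequence_upper_estimate_general X x C hC hupp
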